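/- For every n, q ∈ ℤ⁺, for every arena A with n nodes, every subset U of its nodes, and every q-state strategy S₁ of Player 0 in A, there exists a chromatic (q+1)^n-state strategy S₂ of Player 0 in A such that col(S₂, U) ⊆ col(S₁, U). -/

import Mathlib

/-- An arena over a set of colors `C`. -/
structure Arena (C : Type) where
  V : Type
  E : Type
  finV : Fintype V
  finE : Fintype E
  /-- `isP0 v` means node `v` is controlled by Player 0. -/
  isP0 : V → Prop
  source : E → V
  target : E → V
  col : E → C
  out : ∀ v : V, ∃ e : E, source e = v

namespace Arena

variable {C : Type} (A : Arena C)

/-- `PathFrom v es w` : the edge list `es` forms a finite path from `v` to `w`. -/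
def PathFrom : A.V → List A.E → A.V → Prop
  | v, [], w => v = w
  | v, e :: es, w => A.source e = v ∧ PathFrom (A.target e) es w

/-- The endpoint of the edge list `es` started at `v`. -/
def ptarget (v : A.V) (es : List A.E) : A.V := es.foldl (fun _ e => A.target e) v

/-- A strategy of Player 0: given the starting node and the finite play so far,
it outputs the next edge. -/
def Strategy (A : Arena C) : Type := A.V → List A.E → A.E

/-- A legal strategy moves along an edge leaving the current node. -/
def IsStrategy (S : A.Strategy) : Prop :=
  ∀ v es, A.source (S v es) = A.ptarget v es

/-- The finite edge list `es`, viewed as a play from `v`, is consistent with `S`: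
at every prefix ending in a Player-0 node, the next edge is the one chosen by `S`. -/
def ConsFrom (S : A.Strategy) (v : A.V) (es : List A.E) : Prop :=
  ∀ p e r, es = p ++ e :: r → A.isP0 (A.ptarget v p) → e = S v p

/-- `P` is an infinite path starting at `v`. -/
def InfPlay (v : A.V) (P : ℕ → A.E) : Prop :=
  A.source (P 0) = v ∧ ∀ i, A.target (P i) = A.source (P (i + 1))

/-- The length-`k` prefix of an infinite play, as a list. -/
def prefixList (P : ℕ → A.E) (k : ℕ) : List A.E := List.ofFn (fun i : Fin k => P i)

/-- `colSet S v` is the set of color sequences of infinite plays from `v` consistent with `S`. -/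
def colSet (S : A.Strategy) (v : A.V) : Set (ℕ → C) :=
  { γ | ∃ P : ℕ → A.E, A.InfPlay v P ∧ (∀ k, A.ConsFrom S v (A.prefixList P k)) ∧
      γ = fun i => A.col (P i) }

/-- `colSetU S U = ⋃ v ∈ U, colSet S v`. -/
def colSetU (S : A.Strategy) (U : Set A.V) : Set (ℕ → C) := ⋃ v ∈ U, A.colSet S v

/-- State of a memory structure after reading a list of edges. -/
def mstate {M : Type} (δ : M → A.E → M) (m0 : M) (es : List A.E) : M := es.foldl δ m0

/-- `S` is implemented by the memory structure `(M, m0, δ)`: its moves depend only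
on the current node and the current memory state. -/
def HasMemory (S : A.Strategy) (M : Type) (m0 : M) (δ : M → A.E → M) : Prop :=
  ∀ v1 es1 v2 es2, A.ptarget v1 es1 = A.ptarget v2 es2 →
    A.mstate δ m0 es1 = A.mstate δ m0 es2 → S v1 es1 = S v2 es2

/-- A memory structure is chromatic if transitions depend only on colors of edges. -/
def ChromaticMem (M : Type) (δ : M → A.E → M) : Prop :=
  ∃ σ : M → C → M, ∀ m e, δ m e = σ m (A.col e)

/-- `S` is a `q`-state strategy. -/
def IsQState (S : A.Strategy) (q : ℕ) : Prop :=
  ∃ (M : Type) (_ : Fintype M) (m0 : M) (δ : M → A.E → M),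
    Fintype.card M = q ∧ A.HasMemory S M m0 δ

/-- `S` is a chromatic `q`-state strategy. -/
def IsChromaticQState (S : A.Strategy) (q : ℕ) : Prop :=
  ∃ (M : Type) (_ : Fintype M) (m0 : M) (δ : M → A.E → M),
    Fintype.card M = q ∧ A.ChromaticMem M δ ∧ A.HasMemory S M m0 δ

end Arena

attribute [instance] Arena.finV Arena.finE

open Arena

/-!
The chromatic memory cannot see edges, only colours. It records, for every node `w`, either
nothing or one memory state `m` of `S₁` such that some `S₁`-consistent play from `U` with the
colour sequence read so far ends at `w` in state `m`; reading a colour, such a record can be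
propagated along any edge of that colour, so the update depends only on the colour. There are
`(q + 1) ^ n` such records. `S₂` plays the move of `S₁` for the state recorded at the current
node, and that node always carries a record. Hence every finite prefix of an `S₂`-play from `U`
has the colours of some finite `S₁`-play from `U`, and Kőnig's lemma (finitely many edges) glues
these into one infinite `S₁`-play with the same colours.
-/

theorem List.exists_seq_forall_ofFn_mem {ι α : Type*} [Finite ι] [Finite α]
    (T : ι → Set (List α)) (htake : ∀ i l k, l ∈ T i → l.take k ∈ T i)
    (hlen : ∀ k, ∃ i, ∃ l ∈ T i, l.length = k) :
    ∃ i, ∃ P : ℕ → α, ∀ k, List.ofFn (fun j : Fin k => P j) ∈ T i := by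
  -- the level-`k` nodes of the forest, an inverse system under truncation
  let Level (k : ℕ) := {x : ι × List α // x.2 ∈ T x.1 ∧ x.2.length = k}
  have hfin (k : ℕ) : Finite (Level k) :=
    Finite.of_injective (β := ι × List.Vector α k) (fun x => (x.1.1, ⟨x.1.2, x.2.2⟩))
      fun _ _ h => Subtype.ext (Prod.ext (congrArg (·.1) h) (congrArg (·.2.1) h))
  have hne (k : ℕ) : Nonempty (Level k) := by
    obtain ⟨i, l, hl, hk⟩ := hlen k
    exact ⟨⟨(i, l), hl, hk⟩⟩
  let π {k k' : ℕ} (h : k ≤ k') (x : Level k') : Level k :=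
    ⟨(x.1.1, x.1.2.take k), htake _ _ _ x.2.1, by simp [x.2.2, h]⟩
  obtain ⟨f, hf⟩ := exists_seq_forall_proj_of_forall_finite π
    (fun _ x => Subtype.ext (Prod.ext rfl (List.take_of_length_le x.2.2.le)))
    (fun _ _ _ h _ _ => Subtype.ext (by simp [π, List.take_take, h]))
    (fun _ _ => Set.toFinite _)
  have hroot (k : ℕ) : (f k).1.1 = (f 0).1.1 := congrArg (·.1.1) (hf (Nat.zero_le k))
  have htakef {k k' : ℕ} (h : k ≤ k') : (f k').1.2.take k = (f k).1.2 :=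
    congrArg (·.1.2) (hf h)
  refine ⟨(f 0).1.1, fun n => (f (n + 1)).1.2[n]'(by simp [(f (n + 1)).2.2]), fun k => ?_⟩
  convert (f k).2.1 using 1
  · exact congrArg T (hroot k).symm
  · refine List.ext_getElem (by simp [(f k).2.2]) fun j hj _ => ?_
    simp only [List.length_ofFn] at hj
    simp [← htakef (show j + 1 ≤ k by omega)]

namespace Arena

variable {C : Type} {A : Arena C}

theorem mstate_append_singleton {M : Type} (δ : M → A.E → M) (m0 : M) (es : List A.E)
    (e : A.E) : A.mstate δ m0 (es ++ [e]) = δ (A.mstate δ m0 es) e := by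
  simp [mstate]

theorem PathFrom.ptarget_eq {v w : A.V} {es : List A.E} (h : A.PathFrom v es w) :
    A.ptarget v es = w := by
  induction es generalizing v with
  | nil => exact h
  | cons e es ih => simpa [ptarget] using ih h.2

theorem pathFrom_append {v w : A.V} {es es' : List A.E} :
    A.PathFrom v (es ++ es') w ↔ ∃ x, A.PathFrom v es x ∧ A.PathFrom x es' w := by
  induction es generalizing v with
  | nil => simp [PathFrom]
  | cons e es ih => simp [PathFrom, ih, and_assoc]

theorem pathFrom_append_singleton {v w : A.V} {es : List A.E} {e : A.E} :
    A.PathFrom v (es ++ [e]) w ↔ A.PathFrom v es (A.source e) ∧ A.target e = w := by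
  simp [pathFrom_append, PathFrom]

theorem consFrom_nil (S : A.Strategy) (v : A.V) : A.ConsFrom S v [] := by
  simp [ConsFrom]

theorem ConsFrom.of_append {S : A.Strategy} {v : A.V} {es es' : List A.E}
    (h : A.ConsFrom S v (es ++ es')) : A.ConsFrom S v es :=
  fun p e r hr => h p e (r ++ es') (by simp [hr])

theorem consFrom_append_singleton {S : A.Strategy} {v : A.V} {es : List A.E} {e : A.E} :
    A.ConsFrom S v (es ++ [e]) ↔
      A.ConsFrom S v es ∧ (A.isP0 (A.ptarget v es) → e = S v es) := by
  refine ⟨fun h => ⟨h.of_append, h es e [] rfl⟩, fun ⟨h, hlast⟩ p e' r hr => ?_⟩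
  rcases r.eq_nil_or_concat with rfl | ⟨r, a, rfl⟩
  · obtain ⟨rfl, rfl⟩ : es = p ∧ e = e' := by simpa using hr
    exact hlast
  · have hr : es ++ [e] = (p ++ e' :: r) ++ [a] := by simpa using hr
    exact h p e' r (List.append_inj' hr rfl).1

theorem prefixList_succ (P : ℕ → A.E) (k : ℕ) :
    A.prefixList P (k + 1) = A.prefixList P k ++ [P k] := by
  simp only [prefixList, List.ofFn_succ', List.concat_eq_append, Fin.val_castSucc, Fin.val_last]

theorem infPlay_iff_forall_pathFrom {v : A.V} {P : ℕ → A.E} :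
    A.InfPlay v P ↔ ∀ k, A.PathFrom v (A.prefixList P k) (A.source (P k)) := by
  refine ⟨fun h k => ?_, fun h => ⟨(h 0).symm, fun k => ?_⟩⟩
  · induction k with
    | zero => exact h.1.symm
    | succ k ih => exact prefixList_succ P k ▸ pathFrom_append_singleton.2 ⟨ih, h.2 k⟩
  · exact (pathFrom_append_singleton.1 (prefixList_succ P k ▸ h (k + 1))).2

def memStrategy {M : Type} (δ : M → A.E → M) (m0 : M) (g : A.V → M → A.E) : A.Strategy :=
  fun v es => g (A.ptarget v es) (A.mstate δ m0 es)

theorem HasMemory.exists_eq_memStrategy {S : A.Strategy} {M : Type} {m0 : M}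
    {δ : M → A.E → M} (hS : A.IsStrategy S) (h : A.HasMemory S M m0 δ) :
    ∃ g : A.V → M → A.E, (∀ w m, A.source (g w m) = w) ∧ S = A.memStrategy δ m0 g := by
  classical
  let Reached (w : A.V) (m : M) := ∃ v es, A.ptarget v es = w ∧ A.mstate δ m0 es = m
  refine ⟨fun w m => if hr : Reached w m then S hr.choose hr.choose_spec.choose
    else (A.out w).choose, fun w m => ?_, funext₂ fun v es => ?_⟩
  · dsimp only
    split_ifs with hr
    · exact (hS _ _).trans hr.choose_spec.choose_spec.1
    · exact (A.out w).choose_spec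
  · have hr : Reached (A.ptarget v es) (A.mstate δ m0 es) := ⟨v, es, rfl, rfl⟩
    simp only [memStrategy, dif_pos hr]
    exact h _ _ _ _ hr.choose_spec.choose_spec.1.symm hr.choose_spec.choose_spec.2.symm

def consistentPrefixes (S : A.Strategy) (γ : ℕ → C) (u : A.V) : Set (List A.E) :=
  {es | (∃ w, A.PathFrom u es w) ∧ A.ConsFrom S u es ∧
    ∀ i (hi : i < es.length), A.col es[i] = γ i}

theorem take_mem_consistentPrefixes {S : A.Strategy} {γ : ℕ → C} {u : A.V} {es : List A.E}
    (h : es ∈ A.consistentPrefixes S γ u) (k : ℕ) :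
    es.take k ∈ A.consistentPrefixes S γ u := by
  obtain ⟨⟨w, hpath⟩, hcons, hcol⟩ := h
  rw [← List.take_append_drop k es] at hpath hcons
  obtain ⟨x, hx, -⟩ := pathFrom_append.1 hpath
  exact ⟨⟨x, hx⟩, hcons.of_append, fun i hi => by simpa using hcol i (by simp at hi; omega)⟩

theorem mem_colSet_of_forall_prefixList_mem {S : A.Strategy} {γ : ℕ → C} {u : A.V}
    {P : ℕ → A.E} (h : ∀ k, A.prefixList P k ∈ A.consistentPrefixes S γ u) :
    γ ∈ A.colSet S u := by
  refine ⟨P, infPlay_iff_forall_pathFrom.2 fun k => ?_, fun k => (h k).2.1, funext fun i => ?_⟩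
  · obtain ⟨w, hw⟩ := (h (k + 1)).1
    exact (pathFrom_append_singleton.1 (prefixList_succ P k ▸ hw)).1
  · have hcol := (h (i + 1)).2.2 i (by simp [prefixList])
    simpa only [prefixList, List.getElem_ofFn] using hcol.symm

theorem mem_colSetU_of_forall_exists_length {S : A.Strategy} {U : Set A.V} {γ : ℕ → C}
    (h : ∀ k, ∃ u ∈ U, ∃ es ∈ A.consistentPrefixes S γ u, es.length = k) :
    γ ∈ A.colSetU S U := by
  obtain ⟨u, P, hP⟩ := List.exists_seq_forall_ofFn_mem (ι := U)
    (fun u => A.consistentPrefixes S γ u) (fun _ _ k hl => take_mem_consistentPrefixes hl k)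
    fun k => let ⟨u, hu, hes⟩ := h k; ⟨⟨u, hu⟩, hes⟩
  exact Set.mem_biUnion u.2 (mem_colSet_of_forall_prefixList_mem hP)

section ChromaticSimulation

variable (U : Set A.V) {M : Type} (m0 : M) (δ : M → A.E → M) (g : A.V → M → A.E)

def IsSuccMem (f : A.V → Option M) (c : C) (w : A.V) (m' : M) : Prop :=
  ∃ e m, f (A.source e) = some m ∧ A.target e = w ∧ A.col e = c ∧
    (A.isP0 (A.source e) → e = g (A.source e) m) ∧ δ m e = m'

open Classical in
noncomputable def chromUpdate (f : A.V → Option M) (c : C) : A.V → Option M :=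
  fun w => if h : ∃ m', IsSuccMem δ g f c w m' then some h.choose else none

noncomputable def chromTrans (f : A.V → Option M) (e : A.E) : A.V → Option M :=
  chromUpdate δ g f (A.col e)

open Classical in
noncomputable def initMem : A.V → Option M :=
  fun w => if w ∈ U then some m0 else none

noncomputable def chromMem (es : List A.E) : A.V → Option M :=
  A.mstate (chromTrans δ g) (initMem U m0) es

noncomputable def chromStrategy : A.Strategy := fun v es =>
  (chromMem U m0 δ g es (A.ptarget v es)).elim (A.out (A.ptarget v es)).choose
    (g (A.ptarget v es))

variable {U m0 δ g}

theorem chromStrategy_isStrategy (hg : ∀ w m, A.source (g w m) = w) :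
    A.IsStrategy (chromStrategy U m0 δ g) := by
  intro v es
  unfold chromStrategy
  cases chromMem U m0 δ g es (A.ptarget v es) with
  | none => exact (A.out _).choose_spec
  | some m => exact hg _ m

theorem chromStrategy_hasMemory :
    A.HasMemory (chromStrategy U m0 δ g) (A.V → Option M) (initMem U m0) (chromTrans δ g) := by
  intro v1 es1 v2 es2 htarget hmem
  simp only [chromStrategy, chromMem, htarget, hmem]

theorem chromMem_append_singleton (es : List A.E) (e : A.E) :
    chromMem U m0 δ g (es ++ [e]) = chromUpdate δ g (chromMem U m0 δ g es) (A.col e) :=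
  mstate_append_singleton _ _ es e

theorem exists_play_of_chromMem_eq_some {es' : List A.E} {w : A.V} {m : M}
    (h : chromMem U m0 δ g es' w = some m) :
    ∃ u ∈ U, ∃ es, A.PathFrom u es w ∧ A.ConsFrom (A.memStrategy δ m0 g) u es ∧
      A.mstate δ m0 es = m ∧ es.map A.col = es'.map A.col := by
  classical
  induction es' using List.reverseRecOn generalizing w m with
  | nil =>
    by_cases hw : w ∈ U
    · obtain rfl : m0 = m := by simpa [chromMem, mstate, initMem, hw] using h
      exact ⟨w, hw, [], rfl, consFrom_nil _ _, rfl, rfl⟩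
    · simp [chromMem, mstate, initMem, hw] at h
  | append_singleton es' e' ih =>
    rw [chromMem_append_singleton, chromUpdate] at h
    split_ifs at h with hsucc
    obtain ⟨e, mm, hmm, rfl, hcol, hmove, rfl⟩ :=
      Option.some_injective _ h ▸ hsucc.choose_spec
    obtain ⟨u, hu, es, hpath, hcons, hmem, hcols⟩ := ih hmm
    refine ⟨u, hu, es ++ [e], pathFrom_append_singleton.2 ⟨hpath, rfl⟩,
      consFrom_append_singleton.2 ⟨hcons, fun hP0 => ?_⟩,
      by rw [mstate_append_singleton, hmem], by simp [hcols, hcol]⟩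
    rw [hpath.ptarget_eq] at hP0
    rw [hmove hP0, memStrategy, hpath.ptarget_eq, hmem]

theorem chromStrategy_eq_of_chromMem_eq_some {v : A.V} {es : List A.E} {m : M}
    (h : chromMem U m0 δ g es (A.ptarget v es) = some m) :
    chromStrategy U m0 δ g v es = g (A.ptarget v es) m := by
  simp [chromStrategy, h]

theorem exists_chromMem_eq_some_of_consFrom {v w : A.V} {es : List A.E} (hv : v ∈ U)
    (hpath : A.PathFrom v es w) (hcons : A.ConsFrom (chromStrategy U m0 δ g) v es) :
    ∃ m, chromMem U m0 δ g es w = some m := by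
  classical
  induction es using List.reverseRecOn generalizing w with
  | nil =>
    obtain rfl : v = w := hpath
    exact ⟨m0, by simp [chromMem, mstate, initMem, hv]⟩
  | append_singleton es e ih =>
    obtain ⟨hpath_es, rfl⟩ := pathFrom_append_singleton.1 hpath
    obtain ⟨hcons_es, hlast⟩ := consFrom_append_singleton.1 hcons
    obtain ⟨m, hm⟩ := ih hpath_es hcons_es
    have hsucc : IsSuccMem δ g (chromMem U m0 δ g es) (A.col e) (A.target e) (δ m e) :=
      ⟨e, m, hm, rfl, rfl, fun hP0 => by
        rw [← hpath_es.ptarget_eq] at hP0 hm ⊢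
        exact (hlast hP0).trans (chromStrategy_eq_of_chromMem_eq_some hm), rfl⟩
    rw [chromMem_append_singleton, chromUpdate, dif_pos ⟨_, hsucc⟩]
    exact ⟨_, rfl⟩

theorem colSetU_chromStrategy_subset :
    A.colSetU (chromStrategy U m0 δ g) U ⊆ A.colSetU (A.memStrategy δ m0 g) U := by
  intro γ hγ
  obtain ⟨v, hv, P, hplay, hcons, rfl⟩ := Set.mem_iUnion₂.1 hγ
  refine mem_colSetU_of_forall_exists_length fun k => ?_
  have hpath := infPlay_iff_forall_pathFrom.1 hplay k
  obtain ⟨m, hm⟩ := exists_chromMem_eq_some_of_consFrom hv hpath (hcons k)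
  obtain ⟨u, hu, es, hpath', hcons', -, hcols⟩ := exists_play_of_chromMem_eq_some hm
  have hlen : es.length = k := by simpa [prefixList] using congrArg List.length hcols
  refine ⟨u, hu, es, ⟨⟨_, hpath'⟩, hcons', fun i hi => ?_⟩, hlen⟩
  subst hlen
  simpa [prefixList, hi] using congrArg (·[i]?) hcols

end ChromaticSimulation

end Arena

theorem chromatic_upper_bound_general {C : Type} (n q : ℕ)
    (A : Arena C) (hcard : Fintype.card A.V = n)
    (U : Set A.V)
    (S₁ : A.Strategy) (hS₁ : A.IsStrategy S₁) (hq₁ : A.IsQState S₁ q) :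
    ∃ S₂ : A.Strategy, A.IsStrategy S₂ ∧ A.IsChromaticQState S₂ ((q + 1) ^ n) ∧
      A.colSetU S₂ U ⊆ A.colSetU S₁ U := by
  classical
  obtain ⟨M, _, m0, δ, hM, hmem⟩ := hq₁
  obtain ⟨g, hg, rfl⟩ := hmem.exists_eq_memStrategy hS₁
  refine ⟨chromStrategy U m0 δ g, chromStrategy_isStrategy hg,
    ⟨A.V → Option M, inferInstance, initMem U m0, chromTrans δ g, ?_,
      ⟨chromUpdate δ g, fun _ _ => rfl⟩, chromStrategy_hasMemory⟩,
    colSetU_chromStrategy_subset⟩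
  rw [Fintype.card_fun, Fintype.card_option, hM, hcard]

/-- For every `n, q ≥ 1`, every arena with `n` nodes, every subset `U` of its
nodes, and every `q`-state strategy `S₁` of Player 0, there is a chromatic
`(q+1)^n`-state strategy `S₂` of Player 0 with `col(S₂, U) ⊆ col(S₁, U)`. -/
theorem chromatic_upper_bound {C : Type} (n q : ℕ) (hn : 1 ≤ n) (hq : 1 ≤ q)
    (A : Arena C) (hcard : Fintype.card A.V = n)
    (U : Set A.V)
    (S₁ : A.Strategy) (hS₁ : A.IsStrategy S₁) (hq₁ : A.IsQState S₁ q) :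
    ∃ S₂ : A.Strategy, A.IsStrategy S₂ ∧ A.IsChromaticQState S₂ ((q + 1) ^ n) ∧
      A.colSetU S₂ U ⊆ A.colSetU S₁ U :=
  chromatic_upper_bound_general n q A hcard U S₁ hS₁ hq₁
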